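/- Let f₀(τ) = Σ_{k=1}^∞ e^{√k/2} τ^k and g(t) = ln( μ_{f₀}(t)/(1−t) ) for t ∈ (1/2, 1). Then g is positive, continuous and increasing on (1/2,1) with lim_{t→1⁻} g(t) = +∞, so it has an inverse g⁻¹ : ℝ₊ → (1/2,1); moreover there exists t* ∈ (1/2,1) such that for all t ∈ (t*,1): g⁻¹(3 g(t)) − g⁻¹( g(t)/3 ) > 1 − g⁻¹(3 g(t)). -/

import Mathlib

/-!
With `c = -log t`, the logarithm of the maximal term is `sup_n (√n / 2 - c n)`, which lies between
`1 / (16 c) - c` and `1 / (16 c)`. Since `c ~ 1 - t`, this gives `(1 - t) g(t) → 1 / 16`, and all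
qualitative properties of `g` follow (monotonicity and continuity come from the maximal term being
monotone and convex). Consequently `1 - g⁻¹(y) ~ 1 / (16 y)`, so for `t` near `1` the gap
`1 - g⁻¹(g(t) / 3)` is about nine times `1 - g⁻¹(3 g(t))`, and nine exceeds two.
-/

open MeasureTheory Set Filter

/-- Maximal term of the power series with coefficients `a`. -/
noncomputable def maxTerm (a : ℕ → ℂ) (r : ℝ) : ℝ :=
  ⨆ n : ℕ, ‖a n‖ * r ^ n

/-- Coefficients of `f₀(τ) = ∑_{k=1}^∞ e^{√k/2} τ^k`. -/
noncomputable def f0Coef : ℕ → ℂ := fun k =>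
  if k = 0 then 0 else (Real.exp (Real.sqrt k / 2) : ℂ)

/-- `g(t) = ln(μ_{f₀}(t)/(1−t))`. -/
noncomputable def gFun (t : ℝ) : ℝ := Real.log (maxTerm f0Coef t / (1 - t))

open Real Topology Function

section MaxTerm

variable {a : ℕ → ℂ}

lemma le_maxTerm {r : ℝ} (h : BddAbove (range fun n => ‖a n‖ * r ^ n)) (n : ℕ) :
    ‖a n‖ * r ^ n ≤ maxTerm a r :=
  le_ciSup h n

lemma maxTerm_le_maxTerm {r s : ℝ} (hr : 0 ≤ r) (hrs : r ≤ s)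
    (hs : BddAbove (range fun n => ‖a n‖ * s ^ n)) : maxTerm a r ≤ maxTerm a s :=
  ciSup_le fun n => (mul_le_mul_of_nonneg_left (pow_le_pow_left₀ hr hrs n) (norm_nonneg _)).trans
    (le_maxTerm hs n)

lemma convexOn_maxTerm {S : Set ℝ} (hS : Convex ℝ S) (hS₀ : S ⊆ Ici 0)
    (hbdd : ∀ r ∈ S, BddAbove (range fun n => ‖a n‖ * r ^ n)) : ConvexOn ℝ S (maxTerm a) := by
  refine ⟨hS, fun x hx y hy p q hp hq hpq => ciSup_le fun n => ?_⟩
  have hpow := (convexOn_pow n).2 (hS₀ hx) (hS₀ hy) hp hq hpq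
  simp only [smul_eq_mul] at hpow ⊢
  calc ‖a n‖ * (p * x + q * y) ^ n ≤ ‖a n‖ * (p * x ^ n + q * y ^ n) := by gcongr
    _ = p * (‖a n‖ * x ^ n) + q * (‖a n‖ * y ^ n) := by ring
    _ ≤ p * maxTerm a x + q * maxTerm a y := by
      gcongr
      · exact le_maxTerm (hbdd x hx) n
      · exact le_maxTerm (hbdd y hy) n

end MaxTerm

lemma sqrt_div_two_sub_mul_le {c : ℝ} (hc : 0 < c) {x : ℝ} (hx : 0 ≤ x) :
    √x / 2 - c * x ≤ 1 / (16 * c) := by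
  have hsq : 1 / (16 * c) - (√x / 2 - c * x) = (4 * c * √x - 1) ^ 2 / (16 * c) := by
    field_simp
    linear_combination (-32 * c ^ 2) * sq_sqrt hx
  have : 0 ≤ (4 * c * √x - 1) ^ 2 / (16 * c) := by positivity
  linarith

lemma exists_sqrt_div_two_sub_mul_ge {c : ℝ} (hc : 0 < c) :
    ∃ n : ℕ, n ≠ 0 ∧ 1 / (16 * c) - c ≤ √n / 2 - c * n := by
  set n := ⌈1 / (16 * c ^ 2)⌉₊
  have hn_ge : 1 / (16 * c ^ 2) ≤ n := Nat.le_ceil _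
  have hn_le : (n : ℝ) ≤ 1 / (16 * c ^ 2) + 1 := (Nat.ceil_lt_add_one (by positivity)).le
  have hsqrt : 1 / (4 * c) ≤ √n := by
    rw [le_sqrt (by positivity) (by positivity)]
    convert hn_ge using 1
    field_simp
    ring
  have hcn : c * n ≤ 1 / (16 * c) + c := by
    calc c * n ≤ c * (1 / (16 * c ^ 2) + 1) := by gcongr
      _ = 1 / (16 * c) + c := by field_simp
  refine ⟨n, (Nat.ceil_pos.2 (by positivity)).ne', ?_⟩
  have : 1 / (16 * c) = 1 / (4 * c) / 2 - 1 / (16 * c) := by field_simp; ring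
  linarith

section F0

lemma norm_f0Coef_mul_pow {n : ℕ} (hn : n ≠ 0) {t : ℝ} (ht : 0 < t) :
    ‖f0Coef n‖ * t ^ n = exp (√n / 2 - (-log t) * n) := by
  rw [f0Coef, if_neg hn, Complex.norm_real, norm_of_nonneg (exp_pos _).le,
    ← exp_log (pow_pos ht n), log_pow, ← exp_add]
  ring_nf

variable {t : ℝ}

lemma norm_f0Coef_mul_pow_le (ht₀ : 0 < t) (ht₁ : t < 1) (n : ℕ) :
    ‖f0Coef n‖ * t ^ n ≤ exp (1 / (16 * -log t)) := by
  rcases eq_or_ne n 0 with rfl | hn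
  · simp [f0Coef, (exp_pos _).le]
  · rw [norm_f0Coef_mul_pow hn ht₀, exp_le_exp]
    exact sqrt_div_two_sub_mul_le (neg_pos.2 (log_neg ht₀ ht₁)) n.cast_nonneg

lemma bddAbove_f0Coef_terms (ht₀ : 0 < t) (ht₁ : t < 1) :
    BddAbove (range fun n => ‖f0Coef n‖ * t ^ n) :=
  ⟨_, forall_mem_range.2 (norm_f0Coef_mul_pow_le ht₀ ht₁)⟩

lemma self_le_maxTerm_f0Coef (ht₀ : 0 < t) (ht₁ : t < 1) : t ≤ maxTerm f0Coef t := by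
  have h := le_maxTerm (bddAbove_f0Coef_terms ht₀ ht₁) 1
  rw [norm_f0Coef_mul_pow one_ne_zero ht₀] at h
  have : log t ≤ √(1 : ℕ) / 2 - (-log t) * (1 : ℕ) := by simp
  calc t = exp (log t) := (exp_log ht₀).symm
    _ ≤ _ := exp_le_exp.2 this
    _ ≤ _ := h

lemma maxTerm_f0Coef_pos (ht₀ : 0 < t) (ht₁ : t < 1) : 0 < maxTerm f0Coef t :=
  ht₀.trans_le (self_le_maxTerm_f0Coef ht₀ ht₁)

lemma log_maxTerm_f0Coef_le (ht₀ : 0 < t) (ht₁ : t < 1) :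
    log (maxTerm f0Coef t) ≤ 1 / (16 * -log t) :=
  (log_le_iff_le_exp (maxTerm_f0Coef_pos ht₀ ht₁)).2
    (ciSup_le (norm_f0Coef_mul_pow_le ht₀ ht₁))

lemma le_log_maxTerm_f0Coef (ht₀ : 0 < t) (ht₁ : t < 1) :
    1 / (16 * -log t) - -log t ≤ log (maxTerm f0Coef t) := by
  obtain ⟨n, hn, hle⟩ := exists_sqrt_div_two_sub_mul_ge (neg_pos.2 (log_neg ht₀ ht₁))
  rw [le_log_iff_exp_le (maxTerm_f0Coef_pos ht₀ ht₁)]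
  calc exp (1 / (16 * -log t) - -log t) ≤ exp (√n / 2 - (-log t) * n) := exp_le_exp.2 hle
    _ = ‖f0Coef n‖ * t ^ n := (norm_f0Coef_mul_pow hn ht₀).symm
    _ ≤ maxTerm f0Coef t := le_maxTerm (bddAbove_f0Coef_terms ht₀ ht₁) n

lemma continuousOn_maxTerm_f0Coef : ContinuousOn (maxTerm f0Coef) (Ioo 0 1) :=
  (convexOn_maxTerm (convex_Ioo 0 1) (fun _ h => le_of_lt h.1)
    fun _ h => bddAbove_f0Coef_terms h.1 h.2).continuousOn isOpen_Ioo

lemma gFun_eq_log_sub_log (ht₀ : 0 < t) (ht₁ : t < 1) :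
    gFun t = log (maxTerm f0Coef t) - log (1 - t) :=
  log_div (maxTerm_f0Coef_pos ht₀ ht₁).ne' (sub_pos.2 ht₁).ne'

lemma gFun_pos (ht : t ∈ Ioo (1 / 2 : ℝ) 1) : 0 < gFun t := by
  obtain ⟨ht₀, ht₁⟩ := ht
  refine log_pos ((one_lt_div (by linarith)).2 ?_)
  linarith [self_le_maxTerm_f0Coef (by linarith) ht₁]

lemma continuousOn_gFun : ContinuousOn gFun (Ioo 0 1) :=
  (continuousOn_maxTerm_f0Coef.div (by fun_prop) fun _ h => (sub_pos.2 h.2).ne').log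
    fun _ h => (div_pos (maxTerm_f0Coef_pos h.1 h.2) (sub_pos.2 h.2)).ne'

lemma strictMonoOn_gFun : StrictMonoOn gFun (Ioo 0 1) := by
  rintro s ⟨hs₀, hs₁⟩ t ⟨ht₀, ht₁⟩ hst
  have hmono : maxTerm f0Coef s ≤ maxTerm f0Coef t :=
    maxTerm_le_maxTerm hs₀.le hst.le (bddAbove_f0Coef_terms ht₀ ht₁)
  refine log_lt_log (div_pos (maxTerm_f0Coef_pos hs₀ hs₁) (sub_pos.2 hs₁)) ?_
  calc maxTerm f0Coef s / (1 - s) < maxTerm f0Coef s / (1 - t) := by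
        gcongr
        exact maxTerm_f0Coef_pos hs₀ hs₁
    _ ≤ maxTerm f0Coef t / (1 - t) := by gcongr

-- With `c = -log t` one has `1 - t ≤ c ≤ (1 - t) / t`, so `(1 - t) log μ(t)` is squeezed between
-- `t / 16 - (1 - t) c` and `1 / 16`, while `(1 - t) log (1 - t) → 0`.
lemma tendsto_one_sub_mul_gFun :
    Tendsto (fun t => (1 - t) * gFun t) (𝓝[<] 1) (𝓝 (1 / 16)) := by
  have hsub : Tendsto (fun t : ℝ => 1 - t) (𝓝 1) (𝓝 0) :=
    (continuous_sub_left 1).tendsto' 1 0 (sub_self 1)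
  have hxlogx : Tendsto (fun t : ℝ => (1 - t) * log (1 - t)) (𝓝 1) (𝓝 0) :=
    (continuous_mul_log.tendsto' 0 0 (by simp)).comp hsub
  have hlower : Tendsto (fun t => t / 16 - (1 - t) * -log t - (1 - t) * log (1 - t)) (𝓝 1)
      (𝓝 (1 / 16)) := by
    have hlog : Tendsto (fun t => (1 - t) * -log t) (𝓝 1) (𝓝 0) := by
      simpa using hsub.mul (continuousAt_log one_ne_zero).tendsto.neg
    simpa using ((tendsto_id.div_const 16).sub hlog).sub hxlogx
  have hupper : Tendsto (fun t => 1 / 16 - (1 - t) * log (1 - t)) (𝓝 1) (𝓝 (1 / 16)) := by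
    simpa using tendsto_const_nhds.sub hxlogx
  refine tendsto_of_tendsto_of_tendsto_of_le_of_le' (hlower.mono_left nhdsWithin_le_nhds)
    (hupper.mono_left nhdsWithin_le_nhds) ?_ ?_ <;>
    filter_upwards [Ioo_mem_nhdsLT zero_lt_one] with t ⟨ht₀, ht₁⟩ <;>
    rw [gFun_eq_log_sub_log ht₀ ht₁, mul_sub]
  · have hc : -log t ≤ (1 - t) / t := by
      have := one_sub_inv_le_log_of_pos ht₀
      rw [sub_div, div_self ht₀.ne', one_div]
      linarith
    have hc₀ : 0 < -log t := neg_pos.2 (log_neg ht₀ ht₁)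
    have hmain : t / 16 ≤ (1 - t) * (1 / (16 * -log t)) := by
      rw [mul_one_div, le_div_iff₀ (by positivity)]
      have := mul_le_mul_of_nonneg_left hc ht₀.le
      rw [mul_div_cancel₀ _ ht₀.ne'] at this
      nlinarith
    nlinarith [le_log_maxTerm_f0Coef ht₀ ht₁]
  · have hc : 1 - t ≤ -log t := by linarith [log_le_sub_one_of_pos ht₀]
    have hmain : (1 - t) * (1 / (16 * -log t)) ≤ 1 / 16 := by
      rw [mul_one_div, div_le_iff₀ (by linarith)]
      linarith
    nlinarith [log_maxTerm_f0Coef_le ht₀ ht₁]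

end F0

section InverseGap

variable {g : ℝ → ℝ} {L : ℝ}

lemma tendsto_atTop_of_tendsto_one_sub_mul (hL : 0 < L)
    (h : Tendsto (fun t => (1 - t) * g t) (𝓝[<] 1) (𝓝 L)) : Tendsto g (𝓝[<] 1) atTop := by
  have hsub : Tendsto (fun t : ℝ => 1 - t) (𝓝[<] 1) (𝓝[>] 0) := by
    refine tendsto_nhdsWithin_iff.2 ⟨?_, eventually_nhdsWithin_of_forall fun t ht =>
      mem_Ioi.2 (sub_pos.2 ht)⟩
    exact ((continuous_sub_left 1).tendsto' 1 0 (sub_self 1)).mono_left nhdsWithin_le_nhds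
  refine (h.pos_mul_atTop hL (tendsto_inv_nhdsGT_zero.comp hsub)).congr' ?_
  filter_upwards [self_mem_nhdsWithin] with t (ht : t < 1)
  rw [comp_apply, mul_right_comm, mul_inv_cancel₀ (sub_pos.2 ht).ne', one_mul]

theorem exists_forall_inv_gap_of_tendsto_one_sub_mul {ginv : ℝ → ℝ} {a : ℝ} (ha : a < 1)
    (hL : 0 < L) (hg : ContinuousOn g (Ioo a 1))
    (hlim : Tendsto (fun t => (1 - t) * g t) (𝓝[<] 1) (𝓝 L))
    (hinv : ∀ t ∈ Ioo a 1, ginv (g t) = t) :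
    ∃ tstar ∈ Ioo a 1, ∀ t ∈ Ioo tstar 1,
      ginv (3 * g t) - ginv (g t / 3) > 1 - ginv (3 * g t) := by
  have htop := tendsto_atTop_of_tendsto_one_sub_mul hL hlim
  obtain ⟨s₀, hs₀, hbound⟩ := (mem_nhdsLT_iff_exists_mem_Ico_Ioo_subset ha).1
    (hlim (Ioo_mem_nhds (by linarith : L / 2 < L) (by linarith : L < 2 * L)))
  obtain ⟨s₁, hs₁⟩ : (Ioo s₀ 1).Nonempty := nonempty_Ioo.2 hs₀.2
  have hsurj : Ici (g s₁) ⊆ g '' Ioo s₀ 1 :=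
    isPreconnected_Ioo.intermediate_value_Ici hs₁ (le_principal_iff.2 (Ioo_mem_nhdsLT hs₀.2))
      (hg.mono (Ioo_subset_Ioo_left hs₀.1)) htop
  have hg₁ : 0 < g s₁ :=
    pos_of_mul_pos_right ((half_pos hL).trans (hbound hs₁).1) (by linarith [hs₁.2])
  obtain ⟨tstar, htstar, hbig⟩ := (mem_nhdsLT_iff_exists_mem_Ico_Ioo_subset hs₁.2).1
    (htop.eventually_ge_atTop (3 * g s₁))
  refine ⟨tstar, ⟨by linarith [hs₀.1, hs₁.1, htstar.1], htstar.2⟩, fun t ht => ?_⟩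
  have hgt : 3 * g s₁ ≤ g t := hbig ht
  obtain ⟨A, hA, hgA⟩ := hsurj (show g s₁ ≤ 3 * g t by linarith)
  obtain ⟨B, hB, hgB⟩ := hsurj (show g s₁ ≤ g t / 3 by linarith)
  have hA' : (1 - A) * (3 * g t) < 2 * L := hgA ▸ (hbound hA).2
  have hB' : L / 2 < (1 - B) * (g t / 3) := hgB ▸ (hbound hB).1
  rw [← hgA, ← hgB, hinv A (Ioo_subset_Ioo_left hs₀.1 hA), hinv B (Ioo_subset_Ioo_left hs₀.1 hB)]
  nlinarith

end InverseGap

theorem statement15 :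
    (∀ t ∈ Set.Ioo (1/2 : ℝ) 1, 0 < gFun t) ∧
    ContinuousOn gFun (Set.Ioo (1/2 : ℝ) 1) ∧
    StrictMonoOn gFun (Set.Ioo (1/2 : ℝ) 1) ∧
    Tendsto gFun (nhdsWithin 1 (Set.Iio 1)) atTop ∧
    ∃ ginv : ℝ → ℝ, (∀ y, 0 < y → ginv y ∈ Set.Ioo (1/2 : ℝ) 1) ∧
      (∀ t ∈ Set.Ioo (1/2 : ℝ) 1, ginv (gFun t) = t) ∧
      ∃ tstar ∈ Set.Ioo (1/2 : ℝ) 1, ∀ t ∈ Set.Ioo tstar 1,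
        ginv (3 * gFun t) - ginv (gFun t / 3) > 1 - ginv (3 * gFun t) := by
  have hsub : Ioo (1 / 2 : ℝ) 1 ⊆ Ioo 0 1 := Ioo_subset_Ioo_left (by norm_num)
  have hcont := continuousOn_gFun.mono hsub
  have hmono := strictMonoOn_gFun.mono hsub
  have : Nonempty (Ioo (1 / 2 : ℝ) 1) := ⟨⟨3 / 4, by norm_num, by norm_num⟩⟩
  set ginv : ℝ → Ioo (1 / 2 : ℝ) 1 := invFun fun t => gFun t
  have hinv : ∀ t ∈ Ioo (1 / 2 : ℝ) 1, (ginv (gFun t) : ℝ) = t := fun t ht =>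
    congrArg Subtype.val (leftInverse_invFun (fun x y h => Subtype.ext (hmono.injOn x.2 y.2 h))
      ⟨t, ht⟩)
  exact ⟨fun _ => gFun_pos, hcont, hmono,
    tendsto_atTop_of_tendsto_one_sub_mul (by norm_num) tendsto_one_sub_mul_gFun,
    fun y => ginv y, fun y _ => (ginv y).2, hinv,
    exists_forall_inv_gap_of_tendsto_one_sub_mul (ginv := fun y => ginv y) (by norm_num)
      (by norm_num) hcont tendsto_one_sub_mul_gFun hinv⟩
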